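/- arXiv:1807.11283 — 8 statements merged into one kernel-verified Lean document; each statement's English description precedes it below -/
import Mathlib

section
/- In a finite commutative unital ring K, if a, b ∈ K generate the same principal ideal, i.e. aK = bK, then a and b are associated: a = bu for some unit u ∈ K. -/
/-!
Write `a = b * c` and `b = a * d`, so that `t = c * d` fixes `b`. In a finite ring some power
`e = t ^ (n + 1)` is idempotent; `c` is then invertible in the corner `e * R`, with inverse
`d * t ^ n * e`, so `u = c * e + (1 - e)` is a unit, and `b * u = b * c * e = a`.
-/

theorem exists_isIdempotentElem_pow_succ {M : Type*} [Monoid M] [Finite M] (t : M) :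
    ∃ n, IsIdempotentElem (t ^ (n + 1)) := by
  let _ : TopologicalSpace M := ⊥
  have : DiscreteTopology M := ⟨rfl⟩
  obtain ⟨_, ⟨n, rfl⟩, he⟩ := exists_idempotent_in_compact_subsemigroup
    (fun _ ↦ continuous_of_discreteTopology) (Set.range fun n : ℕ ↦ t ^ (n + 1))
    (Set.range_nonempty _) (Set.toFinite _).isCompact
    (by rintro _ ⟨m, rfl⟩ _ ⟨n, rfl⟩; exact ⟨m + n + 1, by rw [← pow_add]; ring_nf⟩)
  exact ⟨n, he⟩

theorem IsIdempotentElem.isUnit_mul_add_one_sub {R : Type*} [CommRing R] {e x y : R}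
    (he : IsIdempotentElem e) (hxy : x * y = e) : IsUnit (x * e + (1 - e)) :=
  IsUnit.of_mul_eq_one (y * e + (1 - e)) <| by
    linear_combination (e * e) * hxy + (e + 2 - x - y) * he.eq

theorem associated_of_dvd_dvd_of_finite {R : Type*} [CommRing R] [Finite R] {a b : R}
    (hba : b ∣ a) (hab : a ∣ b) : Associated b a := by
  obtain ⟨c, rfl⟩ := hba
  obtain ⟨d, hd⟩ := hab
  have hfix : b * (c * d) = b := by rw [← mul_assoc, ← hd]
  have hfix_pow : ∀ k, b * (c * d) ^ k = b := by
    intro k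
    induction k with
    | zero => rw [pow_zero, mul_one]
    | succ k ih => rw [pow_succ, ← mul_assoc, ih, hfix]
  obtain ⟨n, he⟩ := exists_isIdempotentElem_pow_succ (c * d)
  set e := (c * d) ^ (n + 1) with he_def
  have hu : IsUnit (c * e + (1 - e)) :=
    he.isUnit_mul_add_one_sub (y := d * (c * d) ^ n) (by rw [he_def]; ring)
  refine ⟨hu.unit, ?_⟩
  calc b * (c * e + (1 - e)) = b * e * c + b - b * e := by ring
    _ = b * c := by rw [hfix_pow]; ring

/-- In a finite commutative unital ring, if `a` and `b` generate the same
principal ideal then they are associated: `a = b * u` for some unit `u`. -/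
theorem associated_of_span_eq (K : Type*) [CommRing K] [Fintype K] (a b : K)
    (h : Ideal.span ({a} : Set K) = Ideal.span ({b} : Set K)) :
    ∃ u : Kˣ, a = b * u := by
  obtain ⟨u, hu⟩ := associated_of_dvd_dvd_of_finite
    (Ideal.span_singleton_le_span_singleton.mp h.le)
    (Ideal.span_singleton_le_span_singleton.mp h.ge)
  exact ⟨u, hu.symm⟩
end

section
/- Up to isomorphism there is a unique graph (possibly with loops) on k+1 vertices whose vertex degrees are exactly 1, 2, ..., k+1, where a loop contributes 1 to the degree; it is realized by the graph on vertices v_0, ..., v_k in which v_i and v_j are adjacent iff i + j ≥ k. -/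
/-!
Number the vertices `0, …, k` by degree. Vertex `k` has degree `k + 1`, so it is adjacent to
every vertex (itself included); vertex `0` has degree `1`, so its only neighbour is `k`.
Deleting these two vertices lowers every other degree by exactly one, which leaves vertices
`1, …, k - 1` with degrees `1, …, k - 1`, and induction on `k` forces `i ~ j ↔ k ≤ i + j`.
-/

open Finset

theorem card_filter_range_eq_card_filter_fin (n : ℕ) (p : ℕ → Prop) [DecidablePred p] :
    #{j ∈ range n | p j} = #{j : Fin n | p j} := by
  simp only [card_filter, Fin.sum_univ_eq_sum_range (fun j => if p j then 1 else 0)]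

def HasStaircaseDegrees (R : ℕ → ℕ → Prop) [DecidableRel R] (k : ℕ) : Prop :=
  ∀ i ≤ k, #{j ∈ range (k + 1) | R i j} = i + 1

namespace HasStaircaseDegrees

section

variable {R : ℕ → ℕ → Prop} [DecidableRel R] {k : ℕ}

theorem top_adj (hR : HasStaircaseDegrees R k) {j : ℕ} (hj : j ≤ k) : R k j :=
  card_filter_eq_iff.mp (by rw [hR k le_rfl, card_range]) j (mem_range.mpr (by omega))

variable [Std.Symm R]

theorem zero_adj_iff (hR : HasStaircaseDegrees R k) {j : ℕ} (hj : j ≤ k) : R 0 j ↔ j = k := by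
  obtain ⟨a, ha⟩ := card_eq_one.mp (hR 0 (Nat.zero_le k))
  have zero_adj_iff_eq (x : ℕ) (hx : x ≤ k) : R 0 x ↔ x = a := by
    rw [← mem_singleton, ← ha, mem_filter, mem_range]
    exact ⟨fun h => ⟨by omega, h⟩, And.right⟩
  have top_eq : k = a := (zero_adj_iff_eq k le_rfl).mp (symm_of R (hR.top_adj (Nat.zero_le k)))
  rw [zero_adj_iff_eq j hj, top_eq]

theorem shift {m : ℕ} (hR : HasStaircaseDegrees R (m + 2)) :
    HasStaircaseDegrees (fun a b => R (a + 1) (b + 1)) m := by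
  intro i hi
  show #{j ∈ range (m + 1) | R (i + 1) (j + 1)} = i + 1
  have not_adj_zero : ¬ R (i + 1) 0 := fun h => by
    have := (hR.zero_adj_iff (by omega)).mp (symm_of R h)
    omega
  have adj_top : R (i + 1) (m + 2) := symm_of R (hR.top_adj (by omega))
  have degree := hR (i + 1) (by omega)
  rw [card_filter, sum_range_succ, sum_range_succ', ← card_filter] at degree
  simp only [not_adj_zero, adj_top, if_false, if_true] at degree
  omega

end

theorem adj_iff {R : ℕ → ℕ → Prop} [DecidableRel R] [Std.Symm R] {k : ℕ}
    (hR : HasStaircaseDegrees R k) {i j : ℕ} (hi : i ≤ k) (hj : j ≤ k) : R i j ↔ k ≤ i + j := by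
  by_cases hi0 : i = 0
  · subst hi0; rw [hR.zero_adj_iff hj]; omega
  by_cases hj0 : j = 0
  · subst hj0; rw [Std.Symm.iff (r := R) i 0, hR.zero_adj_iff hi]; omega
  by_cases hik : i = k
  · subst hik; exact iff_of_true (hR.top_adj hj) (by omega)
  by_cases hjk : j = k
  · subst hjk; exact iff_of_true (symm_of R (hR.top_adj hi)) (by omega)
  obtain ⟨m, rfl⟩ : ∃ m, k = m + 2 := ⟨k - 2, by omega⟩
  obtain ⟨a, rfl⟩ : ∃ a, i = a + 1 := ⟨i - 1, by omega⟩
  obtain ⟨b, rfl⟩ : ∃ b, j = b + 1 := ⟨j - 1, by omega⟩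
  have : Std.Symm (fun a b => R (a + 1) (b + 1)) := ⟨fun _ _ h => symm_of R h⟩
  rw [hR.shift.adj_iff (by omega : a ≤ m) (by omega : b ≤ m)]
  omega
termination_by k

end HasStaircaseDegrees

theorem staircase_unique_general (k : ℕ) (V : Type*) [Fintype V]
    (Adj : V → V → Prop) [DecidableRel Adj] (hsymm : Symmetric Adj)
    (hdeg : ∃ σ : Fin (k + 1) ≃ V,
      ∀ i : Fin (k + 1), (Finset.univ.filter (fun w => Adj (σ i) w)).card = (i : ℕ) + 1) :
    ∃ φ : V ≃ Fin (k + 1), ∀ a b : V, Adj a b ↔ k ≤ (φ a : ℕ) + (φ b : ℕ) := by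
  obtain ⟨σ, hσ⟩ := hdeg
  let R (a b : ℕ) : Prop := Adj (σ (Fin.ofNat (k + 1) a)) (σ (Fin.ofNat (k + 1) b))
  have : Std.Symm R := ⟨fun _ _ h => hsymm h⟩
  have hR : HasStaircaseDegrees R k := by
    intro i hi
    have hσi := hσ (Fin.ofNat (k + 1) i)
    rw [Fin.val_ofNat, Nat.mod_eq_of_lt (Nat.lt_succ_of_le hi)] at hσi
    rw [← hσi, card_filter_range_eq_card_filter_fin]
    exact card_equiv σ (fun j => by simp [R])
  refine ⟨σ.symm, fun a b => ?_⟩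
  simpa [R] using hR.adj_iff (σ.symm a).is_le (σ.symm b).is_le

/-- Up to isomorphism there is a unique graph (loops allowed) on `k + 1`
vertices whose vertex degrees are exactly `1, 2, ..., k + 1` (a loop
contributing `1` to the degree); it is realized by the staircase graph `SG_k`
on `Fin (k+1)` in which `i` and `j` are adjacent iff `i + j ≥ k`. -/
theorem staircase_unique (k : ℕ) (V : Type*) [Fintype V] [DecidableEq V]
    (Adj : V → V → Prop) [DecidableRel Adj] (hsymm : Symmetric Adj)
    (hcard : Fintype.card V = k + 1)
    (hdeg : ∃ σ : Fin (k + 1) ≃ V,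
      ∀ i : Fin (k + 1), (Finset.univ.filter (fun w => Adj (σ i) w)).card = (i : ℕ) + 1) :
    ∃ φ : V ≃ Fin (k + 1), ∀ a b : V, Adj a b ↔ k ≤ (φ a : ℕ) + (φ b : ℕ) :=
  staircase_unique_general k V Adj hsymm hdeg
end

section
/- For a prime p and a nonnegative integer k, the compressed zero-divisor graph Θ(ℤ_{p^k}) is isomorphic to the staircase graph SG_k: its vertices are the classes [p^0], [p^1], ..., [p^k], and [p^i] is adjacent to [p^j] iff i + j ≥ k. -/
/-!
Every residue in `ℤ/p^k` is `p^m` times a residue prime to `p`, i.e. times a unit. Two powers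
`p^i, p^j` with `i, j ≤ k` are associated only if `i = j`, since `p^(k-i)` annihilates `p^i` but
annihilates `p^j` only when `i ≤ j`. So the associatedness classes are `[p^0], …, [p^k]`, and
`p^i p^j = p^(i+j)` vanishes exactly when `i + j ≥ k`.
-/

section PowChain

variable {M : Type*} [CommMonoidWithZero M] {x : M} {k : ℕ}

theorem le_of_associated_pow (hx : ∀ m, x ^ m = 0 ↔ k ≤ m) {i j : ℕ} (hi : i ≤ k)
    (h : Associated (x ^ i) (x ^ j)) : i ≤ j := by
  have hij : Associated (x ^ (i + (k - i))) (x ^ (j + (k - i))) := by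
    simpa only [pow_add] using h.mul_right (x ^ (k - i))
  have hzero : x ^ (j + (k - i)) = 0 := hij.eq_zero_iff.mp ((hx _).mpr (by omega))
  have := (hx _).mp hzero
  omega

theorem bijective_associates_mk_pow (hx : ∀ m, x ^ m = 0 ↔ k ≤ m)
    (hM : ∀ a : M, ∃ m, Associated (x ^ m) a) :
    Function.Bijective fun i : Fin (k + 1) => Associates.mk (x ^ (i : ℕ)) := by
  constructor
  · intro i j hij
    have h := Associates.mk_eq_mk_iff_associated.mp hij
    have := le_of_associated_pow hx (Nat.lt_succ_iff.mp i.isLt) h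
    have := le_of_associated_pow hx (Nat.lt_succ_iff.mp j.isLt) h.symm
    exact Fin.ext (by omega)
  · rintro ⟨a⟩
    obtain ⟨m, hm⟩ := hM a
    rcases le_total m k with hmk | hkm
    · exact ⟨⟨m, by omega⟩, Associates.mk_eq_mk_iff_associated.mpr hm⟩
    · refine ⟨Fin.last k, Associates.mk_eq_mk_iff_associated.mpr ?_⟩
      rwa [Fin.val_last, (hx k).mpr le_rfl, ← (hx m).mpr hkm]

theorem exists_associates_equiv_fin_of_pow (hx : ∀ m, x ^ m = 0 ↔ k ≤ m)
    (hM : ∀ a : M, ∃ m, Associated (x ^ m) a) :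
    ∃ e : Associates M ≃ Fin (k + 1),
      (∀ i : Fin (k + 1), e (Associates.mk (x ^ (i : ℕ))) = i) ∧
      ∀ a b : M, a * b = 0 ↔ k ≤ (e (Associates.mk a) : ℕ) + (e (Associates.mk b) : ℕ) := by
  set g := fun i : Fin (k + 1) => Associates.mk (x ^ (i : ℕ))
  have hg := bijective_associates_mk_pow hx hM
  set e := (Equiv.ofBijective g hg).symm
  refine ⟨e, Equiv.ofBijective_symm_apply_apply g hg, fun a b => ?_⟩
  generalize hi : e (Associates.mk a) = i
  generalize hj : e (Associates.mk b) = j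
  rw [← e.eq_symm_apply] at hi hj
  rw [← Associates.mk_eq_zero, ← Associates.mk_mul_mk, hi, hj, Equiv.symm_symm,
    Equiv.ofBijective_apply, Equiv.ofBijective_apply, Associates.mk_mul_mk, ← pow_add,
    Associates.mk_eq_zero, hx]

end PowChain

namespace ZMod

theorem natCast_pow_eq_zero_iff {p : ℕ} (hp : 1 < p) (k m : ℕ) :
    (p : ZMod (p ^ k)) ^ m = 0 ↔ k ≤ m := by
  rw [← Nat.cast_pow, natCast_eq_zero_iff, Nat.pow_dvd_pow_iff_le_right hp]

theorem exists_associated_natCast_pow {p : ℕ} (hp : p.Prime) {k : ℕ} (a : ZMod (p ^ k)) :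
    ∃ m, Associated ((p : ZMod (p ^ k)) ^ m) a := by
  have : Fact p.Prime := ⟨hp⟩
  by_cases ha : a = 0
  · exact ⟨k, by rw [ha, (natCast_pow_eq_zero_iff hp.one_lt k k).mpr le_rfl]⟩
  obtain ⟨m, c, hpc, hc⟩ :=
    Nat.exists_eq_pow_mul_and_not_dvd ((val_ne_zero a).mpr ha) p hp.ne_one
  have hunit : IsUnit (c : ZMod (p ^ k)) :=
    (isUnit_iff_coprime c _).mpr ((hp.coprime_iff_not_dvd.mpr hpc).symm.pow_right k)
  have hfactor : a = (p : ZMod (p ^ k)) ^ m * c := by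
    rw [← natCast_zmod_val a, hc, Nat.cast_mul, Nat.cast_pow]
  exact ⟨m, hfactor ▸ associated_mul_unit_right _ _ hunit⟩

end ZMod

/-- For a prime `p` and `k ≥ 0`, the compressed zero-divisor graph
`Θ(ℤ_{p^k})` is isomorphic to the staircase graph `SG_k`: its vertices (the
associatedness classes) are `[p^0], ..., [p^k]`, and `[p^i]` is adjacent to
`[p^j]` iff `i + j ≥ k`. -/
theorem theta_zmod_prime_pow (p k : ℕ) (hp : p.Prime) :
    ∃ e : Associates (ZMod (p ^ k)) ≃ Fin (k + 1),
      (∀ i : Fin (k + 1), e (Associates.mk ((p : ZMod (p ^ k)) ^ (i : ℕ))) = i) ∧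
      (∀ a b : ZMod (p ^ k),
        a * b = 0 ↔ k ≤ (e (Associates.mk a) : ℕ) + (e (Associates.mk b) : ℕ)) :=
  exists_associates_equiv_fin_of_pow (ZMod.natCast_pow_eq_zero_iff hp.one_lt k)
    (ZMod.exists_associated_natCast_pow hp)
end

section
/- For finite commutative unital rings K and L, the compressed zero-divisor graph Θ(K × L) is isomorphic to the tensor (categorical) product of graphs Θ(K) × Θ(L), via [(x,y)] ↦ ([x],[y]). -/
theorem Associated.prodMk {M N : Type*} [Monoid M] [Monoid N] {x x' : M} {y y' : N}
    (hx : Associated x x') (hy : Associated y y') : Associated (x, y) (x', y') := by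
  obtain ⟨u, rfl⟩ := hx
  obtain ⟨v, rfl⟩ := hy
  exact ⟨MulEquiv.prodUnits.symm (u, v), rfl⟩

namespace Associates

variable (M N : Type*) [Monoid M] [Monoid N]

/-- Associatedness in `M × N` is componentwise, since `(M × N)ˣ ≃* Mˣ × Nˣ`. -/
def prodEquiv : Associates (M × N) ≃ Associates M × Associates N where
  toFun := Quotient.lift (fun a => (Associates.mk a.1, Associates.mk a.2)) fun _ _ h =>
    Prod.ext (mk_eq_mk_iff_associated.2 (h.map (MonoidHom.fst M N)))
      (mk_eq_mk_iff_associated.2 (h.map (MonoidHom.snd M N)))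
  invFun p := Quotient.liftOn₂ p.1 p.2 (fun x y => Associates.mk (x, y))
    fun _ _ _ _ hx hy => mk_eq_mk_iff_associated.2 (hx.prodMk hy)
  left_inv := by rintro ⟨⟨x, y⟩⟩; rfl
  right_inv := by rintro ⟨⟨x⟩, ⟨y⟩⟩; rfl

@[simp]
theorem prodEquiv_mk (x : M) (y : N) :
    prodEquiv M N (Associates.mk (x, y)) = (Associates.mk x, Associates.mk y) :=
  rfl

end Associates

theorem Prod.mul_eq_zero_iff {M N : Type*} [MulZeroClass M] [MulZeroClass N] (a b : M × N) :
    a * b = 0 ↔ a.1 * b.1 = 0 ∧ a.2 * b.2 = 0 :=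
  Prod.ext_iff

theorem theta_preserves_products_general (K L : Type*) [CommRing K] [CommRing L] :
    (∃ e : Associates (K × L) ≃ Associates K × Associates L,
      ∀ x : K, ∀ y : L, e (Associates.mk (x, y)) = (Associates.mk x, Associates.mk y)) ∧
    (∀ a b : K × L, a * b = 0 ↔ (a.1 * b.1 = 0 ∧ a.2 * b.2 = 0)) :=
  ⟨⟨Associates.prodEquiv K L, Associates.prodEquiv_mk K L⟩, Prod.mul_eq_zero_iff⟩

/-- For finite commutative unital rings `K` and `L`, the compressed
zero-divisor graph `Θ(K × L)` is isomorphic to the tensor product of graphs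
`Θ(K) × Θ(L)` via `[(x, y)] ↦ ([x], [y])`: associatedness classes of the
product correspond to pairs of classes, and `(x, y) * (z, w) = 0` iff both
`x * z = 0` and `y * w = 0`. -/
theorem theta_preserves_products (K L : Type*) [CommRing K] [CommRing L]
    [Fintype K] [Fintype L] :
    (∃ e : Associates (K × L) ≃ Associates K × Associates L,
      ∀ x : K, ∀ y : L, e (Associates.mk (x, y)) = (Associates.mk x, Associates.mk y)) ∧
    (∀ a b : K × L, a * b = 0 ↔ (a.1 * b.1 = 0 ∧ a.2 * b.2 = 0)) :=
  theta_preserves_products_general K L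
end

section
/- Let K be a finite commutative unital local ring and let a, b ∈ K be elements that are neither zero nor units. Then in Θ(K), N([a]) ∪ N([b]) is a proper subset of N([ab]); equivalently, ann(a) ∪ ann(b) ⊊ ann(ab) as subsets of K. -/
/-! In a finite local ring every non-unit is nilpotent. If `a ≠ 0` and `b` is nilpotent, the
largest power with `a * b ^ k ≠ 0` gives `x = b ^ k` killed by `a * b` but not by `a`;
symmetrically there is `y` killed by `a * b` but not by `b`. One of `x`, `y`, `x + y` is then
killed by `a * b` and by neither `a` nor `b`. -/

theorem exists_mul_mul_eq_zero_and_mul_ne_zero {M : Type*} [MonoidWithZero M] {a b : M}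
    (ha : a ≠ 0) (hb : IsNilpotent b) : ∃ x, a * b * x = 0 ∧ a * x ≠ 0 := by
  by_contra! h
  obtain ⟨n, hn⟩ := hb
  have eq_zero_of_mul_pow : ∀ k : ℕ, a * b ^ k = 0 → a = 0 := by
    intro k
    induction k with
    | zero => simp
    | succ k ih => exact fun hk => ih (h _ (by rwa [mul_assoc, ← pow_succ']))
  exact ha (eq_zero_of_mul_pow n (by rw [hn, mul_zero]))

theorem exists_mul_mul_eq_zero_and_mul_ne_zero_and_mul_ne_zero {R : Type*} [CommSemiring R]
    {a b : R} (ha0 : a ≠ 0) (ha : IsNilpotent a) (hb0 : b ≠ 0) (hb : IsNilpotent b) :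
    ∃ z, a * b * z = 0 ∧ a * z ≠ 0 ∧ b * z ≠ 0 := by
  obtain ⟨x, habx, hax⟩ := exists_mul_mul_eq_zero_and_mul_ne_zero ha0 hb
  obtain ⟨y, hbay, hby⟩ := exists_mul_mul_eq_zero_and_mul_ne_zero hb0 ha
  rw [mul_comm b a] at hbay
  by_cases hbx : b * x = 0
  · by_cases hay : a * y = 0
    · exact ⟨x + y, by rw [mul_add, habx, hbay, add_zero], by rwa [mul_add, hay, add_zero],
        by rwa [mul_add, hbx, zero_add]⟩
    · exact ⟨y, hbay, hay, hby⟩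
  · exact ⟨x, habx, hax, hbx⟩

/-- In a finite commutative unital local ring, if `a` and `b` are neither zero
nor units, then `ann a ∪ ann b` is a proper subset of `ann (a * b)`. -/
theorem local_ann_strict (K : Type*) [CommRing K] [Fintype K] [IsLocalRing K]
    (a b : K) (ha0 : a ≠ 0) (ha : ¬IsUnit a) (hb0 : b ≠ 0) (hb : ¬IsUnit b) :
    ({y : K | a * y = 0} ∪ {y : K | b * y = 0}) ⊂ {y : K | a * b * y = 0} := by
  have hsub : {y : K | a * y = 0} ∪ {y : K | b * y = 0} ⊆ {y : K | a * b * y = 0} := by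
    rintro y (hy | hy)
    · change a * b * y = 0
      rw [mul_right_comm, hy, zero_mul]
    · change a * b * y = 0
      rw [mul_assoc, hy, mul_zero]
  have nilpotent_of_not_isUnit {x : K} (hx : ¬IsUnit x) : IsNilpotent x :=
    Ring.KrullDimLE.isNilpotent_iff_mem_nonunits.mpr hx
  obtain ⟨z, habz, haz, hbz⟩ := exists_mul_mul_eq_zero_and_mul_ne_zero_and_mul_ne_zero
    ha0 (nilpotent_of_not_isUnit ha) hb0 (nilpotent_of_not_isUnit hb)
  exact (Set.ssubset_iff_of_subset hsub).mpr ⟨z, habz, by rintro (h | h) <;> contradiction⟩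
end

section
/- If K is a finite commutative unital ring that is not local, then there exists a ∈ K with a neither 0 nor a unit such that ann(a²) = ann(a). Equivalently, the strict containment property N([a]) ∪ N([b]) ⊊ N([ab]) for all non-trivial classes characterizes local rings among finite commutative unital rings. -/
/-!
In a finite local ring every nonunit is nilpotent. If `a, b ≠ 0` are nilpotent and
`ann (a * b) = ann a ∪ ann b`, then, a group never being a union of two proper subgroups,
`ann (a * b)` equals `ann a` (say); iterating gives `ann (a * b ^ k) = ann a` for all `k`,
and `b ^ k = 0` forces `a = 0`. A finite ring that is not local has a nonunit `x` that is not
nilpotent; the ascending chain `ann (x ^ n)` stabilises, and a large power `a = x ^ n` is the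
required element. It also violates strict containment for `b = a`, giving the converse.
-/

open Set

section Annihilator

lemma eq_zero_of_mul_pow_eq_zero {M : Type*} [CommMonoidWithZero M] {a b : M}
    (h : {y | a * b * y = 0} ⊆ {y | a * y = 0}) : ∀ {k : ℕ}, a * b ^ k = 0 → a = 0
  | 0, hk => by simpa using hk
  | k + 1, hk => eq_zero_of_mul_pow_eq_zero h (h (by simpa [pow_succ', mul_assoc] using hk))

lemma exists_setOf_pow_sq_mul_eq_zero_eq {M : Type*} [CommMonoidWithZero M] [Finite M] (x : M) :
    ∃ n ≠ 0, {y : M | (x ^ n) ^ 2 * y = 0} = {y : M | x ^ n * y = 0} := by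
  let ann : ℕ →o Set M := ⟨fun n ↦ {y | x ^ n * y = 0}, monotone_nat_of_le_succ
    fun n y (hy : x ^ n * y = 0) ↦
      show x ^ (n + 1) * y = 0 by rw [pow_succ', mul_assoc, hy, mul_zero]⟩
  obtain ⟨N, hN⟩ := WellFoundedGT.monotone_chain_condition ann
  refine ⟨N + 1, N.succ_ne_zero, ?_⟩
  rw [← pow_mul]
  exact (hN _ (by omega)).symm.trans (hN _ (by omega))

variable {R : Type*} [CommRing R]

lemma setOf_mul_eq_zero_union_ssubset {a b : R} (ha : a ≠ 0) (hb : b ≠ 0)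
    (ha' : IsNilpotent a) (hb' : IsNilpotent b) :
    {y | a * y = 0} ∪ {y | b * y = 0} ⊂ {y | a * b * y = 0} := by
  refine ssubset_of_subset_not_subset (union_subset ?_ ?_) fun h ↦ ?_
  · exact fun y (hy : a * y = 0) ↦ show a * b * y = 0 by rw [mul_right_comm, hy, zero_mul]
  · exact fun y (hy : b * y = 0) ↦ show a * b * y = 0 by rw [mul_assoc, hy, mul_zero]
  obtain ⟨k, hak⟩ := ha'
  obtain ⟨l, hbl⟩ := hb'
  change (LinearMap.ker (LinearMap.mulLeft R (a * b)) : Set R) ⊆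
    LinearMap.ker (LinearMap.mulLeft R a) ∪ LinearMap.ker (LinearMap.mulLeft R b) at h
  rcases AddSubgroupClass.subset_union.mp h with hab | hab
  · exact ha (eq_zero_of_mul_pow_eq_zero hab (by rw [hbl, mul_zero]))
  · rw [mul_comm a b] at hab
    exact hb (eq_zero_of_mul_pow_eq_zero hab (by rw [hak, mul_zero]))

variable [Finite R]

lemma isLocalRing_iff_forall_isNilpotent_iff :
    IsLocalRing R ↔ ∀ x : R, IsNilpotent x ↔ ¬IsUnit x :=
  (and_iff_right (inferInstance : Ring.KrullDimLE 0 R)).symm.trans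
    ((Ring.krullDimLE_zero_and_isLocalRing_tfae R).out 0 2)

lemma exists_setOf_sq_mul_eq_zero_eq_of_not_isLocalRing [Nontrivial R] (h : ¬IsLocalRing R) :
    ∃ a : R, a ≠ 0 ∧ ¬IsUnit a ∧ {y | a ^ 2 * y = 0} = {y | a * y = 0} := by
  obtain ⟨x, hx, hxn⟩ : ∃ x : R, ¬IsUnit x ∧ ¬IsNilpotent x := by
    by_contra! H
    exact h (isLocalRing_iff_forall_isNilpotent_iff.mpr fun x ↦
      ⟨IsNilpotent.not_isUnit, H x⟩)
  obtain ⟨n, hn, hann⟩ := exists_setOf_pow_sq_mul_eq_zero_eq x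
  exact ⟨x ^ n, fun h0 ↦ hxn ⟨n, h0⟩, fun hu ↦ hx ((isUnit_pow_iff hn).mp hu), hann⟩

end Annihilator

/-- If a finite commutative unital ring is not local, then some element `a`,
neither zero nor a unit, satisfies `ann (a²) = ann a`. Equivalently, the strict
containment property `ann a ∪ ann b ⊊ ann (a * b)` for all nontrivial elements
characterizes local rings among finite commutative unital rings. -/
theorem not_local_ann_eq (K : Type*) [CommRing K] [Fintype K] [Nontrivial K] :
    (¬IsLocalRing K → ∃ a : K, a ≠ 0 ∧ ¬IsUnit a ∧
        {y : K | a ^ 2 * y = 0} = {y : K | a * y = 0}) ∧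
    (IsLocalRing K ↔ ∀ a b : K, a ≠ 0 → ¬IsUnit a → b ≠ 0 → ¬IsUnit b →
        ({y : K | a * y = 0} ∪ {y : K | b * y = 0}) ⊂ {y : K | a * b * y = 0}) := by
  refine ⟨exists_setOf_sq_mul_eq_zero_eq_of_not_isLocalRing, fun hK a b ha hau hb hbu ↦ ?_,
    fun H ↦ ?_⟩
  · have hnil := isLocalRing_iff_forall_isNilpotent_iff.mp hK
    exact setOf_mul_eq_zero_union_ssubset ha hb ((hnil a).mpr hau) ((hnil b).mpr hbu)
  · by_contra hK
    obtain ⟨a, ha, hau, hann⟩ := exists_setOf_sq_mul_eq_zero_eq_of_not_isLocalRing hK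
    have := H a a ha hau ha hau
    rw [← sq, hann, union_self] at this
    exact this.ne rfl
end

section
/- Let K be a finite commutative unital local ring which is not a field, and suppose a ∈ K, a not a unit, is such that |ann(a)| ≤ |ann(c)| for every non-unit c ∈ K with c not associated to 1. Then a is irreducible: a cannot be written as a = bc with b and c both non-units. -/
/-!
If `a = b * c` with `b, c` non-units, then `ann b ⊆ ann a`, so minimality forces
`ann (b * c) = ann b`. Iterating, `ann (c ^ k * b) = ann b` for all `k`; as `c` is nilpotent in a
finite local ring, `ann b` is everything and `b = 0`. Then `a = 0` has the largest possible
annihilator, so by minimality every non-unit is `0` and `K` would be a field.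
-/

theorem eq_zero_of_isNilpotent_of_mul_mul_eq_zero {R : Type*} [CommMonoidWithZero R] {b c : R}
    (hc : IsNilpotent c) (h : ∀ y, c * b * y = 0 → b * y = 0) : b = 0 := by
  obtain ⟨n, hn⟩ := hc
  have hpow : ∀ k : ℕ, ∀ y, c ^ k * b * y = 0 → b * y = 0 := by
    intro k
    induction k with
    | zero => simp
    | succ k ih =>
      intro y hy
      apply ih
      have hcb : c * b * (c ^ k * y) = 0 := by rw [← hy, pow_succ']; ac_rfl
      have hb := h _ hcb
      rwa [mul_left_comm, ← mul_assoc] at hb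
  simpa using hpow n 1 (by simp [hn])

theorem eq_zero_of_ncard_univ_le_ncard_annihilator {R : Type*} [MonoidWithZero R] [Finite R]
    {x : R} (h : (Set.univ : Set R).ncard ≤ {y | x * y = 0}.ncard) : x = 0 := by
  have hann : {y | x * y = 0} = Set.univ :=
    Set.eq_of_subset_of_ncard_le (Set.subset_univ _) h
  have h1 : (1 : R) ∈ {y | x * y = 0} := hann ▸ Set.mem_univ 1
  simpa using h1

theorem isField_of_forall_not_isUnit_eq_zero {R : Type*} [CommRing R] [Nontrivial R]
    (h : ∀ x : R, ¬IsUnit x → x = 0) : IsField R where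
  exists_pair_ne := exists_pair_ne R
  mul_comm := mul_comm
  mul_inv_cancel hx := (not_not.mp (mt (h _) hx)).exists_right_inv

theorem least_degree_irreducible_general (K : Type*) [CommRing K] [Fintype K]
    [IsLocalRing K] (hK : ¬IsField K) (a : K)
    (hmin : ∀ c : K, ¬IsUnit c → {y : K | a * y = 0}.ncard ≤ {y : K | c * y = 0}.ncard) :
    ¬∃ b c : K, ¬IsUnit b ∧ ¬IsUnit c ∧ a = b * c := by
  rintro ⟨b, c, hb, hc, rfl⟩
  have hann : {y : K | b * c * y = 0} = {y | b * y = 0} :=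
    (Set.eq_of_subset_of_ncard_le (fun y (hy : b * y = 0) ↦ show b * c * y = 0 by
      rw [mul_right_comm, hy, zero_mul]) (hmin b hb)).symm
  have hb0 : b = 0 := by
    refine eq_zero_of_isNilpotent_of_mul_mul_eq_zero
      (Ring.KrullDimLE.isNilpotent_iff_mem_nonunits.mpr hc) fun y hy ↦ ?_
    rw [mul_comm c] at hy
    exact hann.subset hy
  subst hb0
  refine hK (isField_of_forall_not_isUnit_eq_zero fun x hx ↦ ?_)
  exact eq_zero_of_ncard_univ_le_ncard_annihilator (by simpa using hmin x hx)

/-- In a finite commutative unital local ring which is not a field, a non-unit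
`a` whose annihilator has least cardinality among annihilators of non-units is
irreducible: it is not a product of two non-units. -/
theorem least_degree_irreducible (K : Type*) [CommRing K] [Fintype K]
    [IsLocalRing K] (hK : ¬IsField K) (a : K) (ha : ¬IsUnit a)
    (hmin : ∀ c : K, ¬IsUnit c → {y : K | a * y = 0}.ncard ≤ {y : K | c * y = 0}.ncard) :
    ¬∃ b c : K, ¬IsUnit b ∧ ¬IsUnit c ∧ a = b * c :=
  least_degree_irreducible_general K hK a hmin
end

section
/- Let K be a finite commutative unital local ring whose distinct associatedness classes can be ordered [a_0], ..., [a_n] with ann(a_0) ⊊ ann(a_1) ⊊ ... ⊊ ann(a_n) (i.e. Θ(K) ≅ SG_n). Then [a_i] = [a_1^i] for all 0 ≤ i ≤ n; in particular every element of K is associated to a power of a_1, and every ideal of K is principal, generated by a power of a_1. -/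
/-!
Let `index x` be the position of the class of `x` in the chain of annihilators. Multiplying a
nonzero element by a nonunit strictly raises its index, so `s = a (n - 1)` spans the socle, which
contains `ann (a 1)`. With `t = a 1`, comparing `|tK| · |ann t| = |K| = |sK| · |ann s|` and using
`tK ⊆ m = ann s`, `ann t ⊆ sK` forces `m = tK`. Then every element is a unit times a power of
`t`, and since these powers exhaust the classes with strictly increasing index,
`index (t ^ i) = i`.
-/

open IsLocalRing

def ann {R : Type*} [Mul R] [Zero R] (x : R) : Set R := {y | x * y = 0}

@[simp]
lemma mem_ann {R : Type*} [Mul R] [Zero R] {x y : R} : y ∈ ann x ↔ x * y = 0 := Iff.rfl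

section CommMonoidWithZero

variable {R : Type*} [CommMonoidWithZero R] {x y : R}

lemma ann_subset_ann_of_dvd (h : x ∣ y) : ann x ⊆ ann y := by
  obtain ⟨c, rfl⟩ := h
  intro z hz
  simp only [mem_ann] at hz ⊢
  rw [mul_right_comm, hz, zero_mul]

lemma Associated.ann_eq (h : Associated x y) : ann x = ann y :=
  (ann_subset_ann_of_dvd h.dvd).antisymm (ann_subset_ann_of_dvd h.symm.dvd)

lemma ann_eq_nonunits (hx : x ≠ 0) (hsocle : ∀ w, ¬IsUnit w → w * x = 0) :
    ann x = nonunits R := by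
  ext w
  rw [mem_ann, mem_nonunits_iff, mul_comm]
  exact ⟨fun hw hu => hx (hu.mul_right_eq_zero.1 hw), hsocle w⟩

end CommMonoidWithZero

lemma card_range_mul_mul_card_ann {K : Type*} [CommRing K] [Finite K] (x : K) :
    Nat.card (Set.range (x * ·)) * Nat.card (ann x) = Nat.card K := by
  rw [AddSubgroup.card_eq_card_quotient_mul_card_addSubgroup (AddMonoidHom.mulLeft x).ker,
    Nat.card_congr (QuotientAddGroup.quotientKerEquivRange _).toEquiv]
  rfl

section LocalRing

variable {K : Type*} [CommRing K] [IsLocalRing K]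

lemma IsLocalRing.eq_zero_of_associated_mul {c x : K} (hc : ¬IsUnit c)
    (h : Associated x (c * x)) : x = 0 := by
  obtain ⟨u, hu⟩ := h
  have hunit : IsUnit (1 - c * ↑u⁻¹) :=
    isUnit_one_sub_self_of_mem_nonunits _ fun hcu => hc (isUnit_of_mul_isUnit_left hcu)
  have hker : x * (1 - c * ↑u⁻¹) = 0 := by
    rw [mul_sub, mul_one, ← mul_assoc, mul_comm x c, ← hu, mul_assoc, Units.mul_inv, mul_one,
      sub_self]
  exact hunit.mul_left_eq_zero.1 hker

lemma maximalIdeal_eq_span_of_ann_subset [Finite K] {s t : K} (hs : ann s = nonunits K)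
    (ht : ¬IsUnit t) (hts : ann t ⊆ Set.range (s * ·)) : maximalIdeal K = Ideal.span {t} := by
  have hrange : Set.range (t * ·) ⊆ nonunits K := by
    rintro _ ⟨c, rfl⟩ hu
    exact ht (isUnit_of_mul_isUnit_left hu)
  have hcard : Nat.card (Set.range (t * ·)) = Nat.card (nonunits K) := by
    have hle₁ := Nat.card_mono (Set.toFinite _) hrange
    have hle₂ := Nat.card_mono (Set.toFinite _) hts
    have : Nonempty (ann t) := ⟨⟨0, mul_zero t⟩⟩
    have hpos : 0 < Nat.card (ann t) := Nat.card_pos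
    have hprod := (card_range_mul_mul_card_ann t).trans (card_range_mul_mul_card_ann s).symm
    rw [hs] at hprod
    nlinarith
  have hset : Set.range (t * ·) = nonunits K :=
    Set.eq_of_subset_of_ncard_le hrange (by simp only [← Nat.card_coe_set_eq, hcard, le_rfl])
  ext w
  rw [mem_maximalIdeal, Ideal.mem_span_singleton, ← hset]
  exact ⟨fun ⟨c, hc⟩ => ⟨c, hc.symm⟩, fun ⟨c, hc⟩ => ⟨c, hc.symm⟩⟩

lemma exists_associated_pow_of_maximalIdeal_eq_span {t : K}
    (ht : maximalIdeal K = Ideal.span {t}) (hnil : IsNilpotent t) (x : K) :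
    ∃ k, Associated x (t ^ k) := by
  obtain ⟨N, hN⟩ := hnil
  by_cases hx : x = 0
  · exact ⟨N, by rw [hx, hN]⟩
  have hfin : FiniteMultiplicity t x :=
    ⟨N, fun hdvd => hx (zero_dvd_iff.1 (by rwa [pow_succ, hN, zero_mul] at hdvd))⟩
  set m := multiplicity t x
  obtain ⟨u, hu⟩ : t ^ m ∣ x := pow_multiplicity_dvd t x
  have hunit : IsUnit u := by
    by_contra hu'
    obtain ⟨c, rfl⟩ := Ideal.mem_span_singleton.1 (ht ▸ (mem_maximalIdeal u).2 hu')
    exact hfin.not_pow_dvd_of_multiplicity_lt (lt_add_one m) ⟨c, hu.trans (by ring)⟩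
  exact ⟨m, Associated.symm ⟨hunit.unit, hu.symm⟩⟩

end LocalRing

lemma Ideal.exists_eq_span_pow {R : Type*} [CommRing R] {t : R}
    (hpow : ∀ x : R, ∃ k, Associated x (t ^ k)) (I : Ideal R) :
    ∃ k, I = Ideal.span {t ^ k} := by
  classical
  have hex : ∃ k, t ^ k ∈ I := by
    obtain ⟨k, hk⟩ := hpow 0
    exact ⟨k, (associated_zero_iff_eq_zero _).1 hk.symm ▸ I.zero_mem⟩
  refine ⟨Nat.find hex, le_antisymm (fun x hx => ?_) ?_⟩
  · obtain ⟨c, hxc⟩ := hpow x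
    have hc : t ^ c ∈ I := I.mem_of_dvd hxc.dvd hx
    exact Ideal.mem_span_singleton.2 ((pow_dvd_pow t (Nat.find_min' hex hc)).trans hxc.symm.dvd)
  · rw [Ideal.span_le, Set.singleton_subset_iff]
    exact Nat.find_spec hex

-- The paper's condition `Θ(K) ≅ SG_n`.
structure IsStaircase {K : Type*} [CommRing K] {n : ℕ} (a : Fin (n + 1) → K) : Prop where
  exists_associated : ∀ x, ∃ i, Associated x (a i)
  strictMono_ann : StrictMono fun i => ann (a i)

namespace IsStaircase

variable {K : Type*} [CommRing K] {n : ℕ} {a : Fin (n + 1) → K} {x y : K}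

noncomputable def index (h : IsStaircase a) (x : K) : Fin (n + 1) := (h.exists_associated x).choose

lemma associated_index (h : IsStaircase a) (x : K) : Associated x (a (h.index x)) :=
  (h.exists_associated x).choose_spec

lemma index_le_index_iff (h : IsStaircase a) : h.index x ≤ h.index y ↔ ann x ⊆ ann y := by
  rw [(h.associated_index x).ann_eq, (h.associated_index y).ann_eq]
  exact h.strictMono_ann.le_iff_le.symm

lemma index_eq_index_iff (h : IsStaircase a) : h.index x = h.index y ↔ Associated x y := by
  refine ⟨fun hxy => ?_, fun hxy => ?_⟩
  · exact (h.associated_index x).trans (hxy ▸ (h.associated_index y).symm)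
  · rw [le_antisymm_iff, h.index_le_index_iff, h.index_le_index_iff, hxy.ann_eq]
    exact ⟨subset_rfl, subset_rfl⟩

lemma associated_of_ann_eq (h : IsStaircase a) (hxy : ann x = ann y) : Associated x y :=
  h.index_eq_index_iff.1 <|
    le_antisymm (h.index_le_index_iff.2 hxy.le) (h.index_le_index_iff.2 hxy.ge)

lemma index_apply (h : IsStaircase a) (i : Fin (n + 1)) : h.index (a i) = i :=
  h.strictMono_ann.injective (h.associated_index (a i)).ann_eq.symm

lemma index_le_index_of_dvd (h : IsStaircase a) (hxy : x ∣ y) : h.index x ≤ h.index y :=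
  h.index_le_index_iff.2 (ann_subset_ann_of_dvd hxy)

lemma index_eq_zero_iff (h : IsStaircase a) : h.index x = 0 ↔ IsUnit x := by
  have hone : h.index 1 = 0 :=
    le_antisymm ((h.index_le_index_of_dvd (one_dvd (a 0))).trans (h.index_apply 0).le)
      (Fin.zero_le _)
  rw [← hone, h.index_eq_index_iff, associated_one_iff_isUnit]

lemma index_eq_last_iff (h : IsStaircase a) : h.index x = Fin.last n ↔ x = 0 := by
  have hzero : h.index 0 = Fin.last n :=
    le_antisymm (Fin.le_last _)
      ((h.index_apply (Fin.last n)).symm.le.trans (h.index_le_index_of_dvd (dvd_zero _)))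
  rw [← hzero, h.index_eq_index_iff, associated_zero_iff_eq_zero]

lemma index_lt_index_mul (h : IsStaircase a) [IsLocalRing K] {c : K} (hc : ¬IsUnit c)
    (hx : x ≠ 0) : h.index x < h.index (c * x) :=
  (h.index_le_index_of_dvd (dvd_mul_left x c)).lt_of_ne fun hcx =>
    hx (eq_zero_of_associated_mul hc (h.index_eq_index_iff.1 hcx))

lemma pos (h : IsStaircase a) [Nontrivial K] : 0 < n := by
  refine Nat.pos_of_ne_zero fun hn => one_ne_zero (α := K) ?_
  subst hn
  rw [← h.index_eq_last_iff]
  exact Subsingleton.elim (α := Fin 1) _ _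

lemma not_isUnit_one (h : IsStaircase a) [Nontrivial K] : ¬IsUnit (a 1) := by
  rw [← h.index_eq_zero_iff, h.index_apply, Fin.one_eq_zero_iff]
  have := h.pos
  omega

lemma ann_one_subset_ann (h : IsStaircase a) [Nontrivial K] {w : K} (hw : ¬IsUnit w) :
    ann (a 1) ⊆ ann w := by
  rw [← h.index_le_index_iff, h.index_apply]
  exact Fin.one_le_of_ne_zero (mt h.index_eq_zero_iff.1 hw)

lemma exists_ne_zero_forall_not_isUnit_mul_eq_zero (h : IsStaircase a) [IsLocalRing K] :
    ∃ s : K, s ≠ 0 ∧ ∀ w, ¬IsUnit w → w * s = 0 := by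
  have hn := h.pos
  have hs : (h.index (a ⟨n - 1, by omega⟩) : ℕ) = n - 1 := by rw [h.index_apply]
  have hs0 : a ⟨n - 1, by omega⟩ ≠ 0 := by
    rw [ne_eq, ← h.index_eq_last_iff, Fin.ext_iff, hs, Fin.val_last]
    omega
  refine ⟨_, hs0, fun w hw => h.index_eq_last_iff.1 (Fin.ext ?_)⟩
  have hlt := Fin.lt_def.1 (h.index_lt_index_mul hw hs0)
  have hle := (h.index (w * a ⟨n - 1, by omega⟩)).is_le
  rw [Fin.val_last]
  omega

lemma maximalIdeal_eq_span (h : IsStaircase a) [IsLocalRing K] [Finite K] :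
    maximalIdeal K = Ideal.span {a 1} := by
  obtain ⟨s, hs0, hsocle⟩ := h.exists_ne_zero_forall_not_isUnit_mul_eq_zero
  refine maximalIdeal_eq_span_of_ann_subset (ann_eq_nonunits hs0 hsocle) h.not_isUnit_one ?_
  intro z hz
  obtain rfl | hz0 := eq_or_ne z 0
  · exact ⟨0, mul_zero s⟩
  have hzsocle : ∀ w, ¬IsUnit w → w * z = 0 := fun w hw => h.ann_one_subset_ann hw hz
  obtain ⟨u, hu⟩ := h.associated_of_ann_eq
    ((ann_eq_nonunits hs0 hsocle).trans (ann_eq_nonunits hz0 hzsocle).symm)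
  exact ⟨u, hu⟩

lemma val_index_pow (h : IsStaircase a) [IsLocalRing K] {t : K} (ht : ¬IsUnit t)
    (hpow : ∀ x, ∃ k, Associated x (t ^ k)) {k : ℕ} (hk : k ≤ n) :
    (h.index (t ^ k) : ℕ) = k := by
  induction k with
  | zero => rw [pow_zero, h.index_eq_zero_iff.2 isUnit_one, Fin.val_zero]
  | succ k ih =>
    have ih := ih (by omega)
    have hne : t ^ k ≠ 0 := by
      rw [ne_eq, ← h.index_eq_last_iff, Fin.ext_iff, ih, Fin.val_last]
      omega
    have hlower := Fin.lt_def.1 (h.index_lt_index_mul ht hne)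
    rw [← pow_succ'] at hlower
    obtain ⟨c, hc⟩ := hpow (a ⟨k + 1, by omega⟩)
    have hc' : (h.index (t ^ c) : ℕ) = k + 1 := by
      rw [← h.index_eq_index_iff.2 hc, h.index_apply]
    have hkc : k + 1 ≤ c := by
      by_contra! hck
      have := Fin.le_def.1 (h.index_le_index_of_dvd (pow_dvd_pow t (Nat.le_of_lt_succ hck)))
      omega
    have hupper := Fin.le_def.1 (h.index_le_index_of_dvd (pow_dvd_pow t hkc))
    omega

end IsStaircase

/-- Let `K` be a finite commutative unital local ring whose associatedness
classes can be ordered `[a_0], ..., [a_n]` with strictly increasing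
annihilators (i.e. `Θ(K) ≅ SG_n`). Then `[a_i] = [a_1 ^ i]` for all `i`, and
every ideal of `K` is principal, generated by a power of `a_1`. -/
theorem staircase_labeling (K : Type*) [CommRing K] [Fintype K] [IsLocalRing K]
    (n : ℕ) (a : Fin (n + 1) → K)
    (hcover : ∀ x : K, ∃ i : Fin (n + 1), Associated x (a i))
    (hchain : ∀ i j : Fin (n + 1), i < j →
      {y : K | a i * y = 0} ⊂ {y : K | a j * y = 0}) :
    (∀ i : Fin (n + 1), Associated (a i) ((a 1) ^ (i : ℕ))) ∧
      (∀ I : Ideal K, ∃ k : ℕ, I = Ideal.span {(a 1) ^ k}) := by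
  have h : IsStaircase a := ⟨hcover, hchain⟩
  have hnil : IsNilpotent (a 1) :=
    Ring.KrullDimLE.isNilpotent_iff_mem_nonunits.2 h.not_isUnit_one
  have hpow := exists_associated_pow_of_maximalIdeal_eq_span h.maximalIdeal_eq_span hnil
  refine ⟨fun i => ?_, Ideal.exists_eq_span_pow hpow⟩
  rw [← h.index_eq_index_iff, h.index_apply, Fin.ext_iff,
    h.val_index_pow h.not_isUnit_one hpow i.is_le]
end
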